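/- The infinite term t₁ satisfying t₁ = f(t₁,a) is not joinable with the infinite term t₂ satisfying t₂ = f(t₂,b) under the rule f(x,y) → x: every reduct of t₁ contains the constant a and never contains b, and symmetrically for t₂. -/
import Mathlib


/-- The signature: a binary symbol `f` and constants `a`, `b`. -/
inductive FabSym : Type
  | f | a | b
deriving DecidableEq

/-- Possibly infinite terms over {f, a, b}, represented as assignments of
symbols to binary positions (`false` = first/left argument, `true` =
second/right argument); positions below a constant carry the dummy value
`FabSym.a` (see `WFTm`). -/
def Tm : Type := List Bool → FabSym

/-- Well-formedness: below a non-`f` symbol all positions carry the canonical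
filler `FabSym.a`. -/
def WFTm (t : Tm) : Prop := ∀ p c, t p ≠ FabSym.f → t (p ++ [c]) = FabSym.a

/-- `p` is a reachable (meaningful) position of `t`: all proper prefixes of
`p` carry the binary symbol `f`. -/
def ReachPos (t : Tm) (p : List Bool) : Prop :=
  ∀ q, q <+: p → q ≠ p → t q = FabSym.f

/-- The symbol `x` occurs in `t` (at a reachable position). -/
def OccursIn (t : Tm) (x : FabSym) : Prop := ∃ p, ReachPos t p ∧ t p = x

/-- A rewrite step with the collapsing rule `f(x,y) → x` at position `p`:
the subterm at `p` has root `f` and is replaced by its first argument. -/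
def stepAtT (p : List Bool) (t t' : Tm) : Prop :=
  t p = FabSym.f ∧
    ∀ q, t' q = if p <+: q then t (p ++ false :: q.drop p.length) else t q

/-- A step at depth at least `d`. -/
def stepTGe (d : ℕ) (t t' : Tm) : Prop :=
  ∃ p : List Bool, d ≤ p.length ∧ stepAtT p t t'

/-- `sconvT t s`: there is a strongly convergent reduction of length `≤ ω`
from `t` to `s`: stages `g n` starting at `t`, all steps from stage `n` on
are at depth `≥ n` (so depths tend to infinity), and stage `n` agrees with
the limit `s` below depth `n`. -/
def sconvT (t s : Tm) : Prop :=
  ∃ g : ℕ → Tm, g 0 = t ∧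
    (∀ n, Relation.ReflTransGen (stepTGe n) (g n) (g (n + 1))) ∧
    (∀ n q, q.length < n → g n q = s q)

/-- The infinite term with spine `f(f(f(…,c 2),c 1),c 0)` written inside-out:
all-left positions carry `f`, and the right argument at spine depth `k` is
the constant `c k`. -/
def spineTm (c : ℕ → FabSym) : Tm := fun p =>
  let k := (p.takeWhile fun x => !x).length
  let r := p.drop k
  if r = [] then FabSym.f else if r = [true] then c k else FabSym.a

/-- `s = f(f(s,b),a)`. -/
def sTerm : Tm := spineTm fun k => if k % 2 = 0 then FabSym.a else FabSym.b

/-- `t₁ = f(t₁,a)`. -/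
def t1Term : Tm := spineTm fun _ => FabSym.a

/-- `t₂ = f(t₂,b)`. -/
def t2Term : Tm := spineTm fun _ => FabSym.b

lemma spine_rep (c : FabSym) (n : ℕ) (l : List Bool) :
    spineTm (fun _ => c) (List.replicate n false ++ l) = spineTm (fun _ => c) l := by
  unfold spineTm
  have h : (List.replicate n false ++ l).takeWhile (fun x => !x)
      = List.replicate n false ++ l.takeWhile (fun x => !x) := by
    apply List.takeWhile_append_of_pos
    intro a ha
    simp [List.eq_of_mem_replicate ha]
  simp only [h, List.length_append, List.length_replicate]
  have hd : (List.replicate n false ++ l).drop (n + (l.takeWhile (fun x => !x)).length)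
      = l.drop (l.takeWhile (fun x => !x)).length := by
    rw [List.drop_append]
    simp
  rw [hd]

lemma spine_eq_f (c : FabSym) (hc : c ≠ FabSym.f) (p : List Bool)
    (hp : spineTm (fun _ => c) p = FabSym.f) : p = List.replicate p.length false := by
  unfold spineTm at hp
  simp only at hp
  split at hp
  · next hr =>
    have hlen : p.length ≤ (p.takeWhile (fun x => !x)).length := by
      by_contra h
      push_neg at h
      have := List.drop_eq_nil_iff.mp hr
      omega
    have hself : p.takeWhile (fun x => !x) = p :=
      (List.takeWhile_prefix _).eq_of_length (le_antisymm (List.takeWhile_prefix _).length_le hlen) ..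
    rw [List.eq_replicate_iff]
    refine ⟨rfl, fun b hb => ?_⟩
    have := List.takeWhile_eq_self_iff.mp hself b hb
    simpa using this
  · split at hp
    · exact absurd hp hc
    · exact absurd hp (by decide)

lemma step_fix (c : FabSym) (hc : c ≠ FabSym.f) {p : List Bool} {t' : Tm}
    (h : stepAtT p (spineTm fun _ => c) t') : t' = spineTm fun _ => c := by
  obtain ⟨hf, ht⟩ := h
  have hrep := spine_eq_f c hc p hf
  funext q
  rw [ht q]
  split
  · next hpre =>
    obtain ⟨r, rfl⟩ := hpre
    rw [List.drop_left]
    calc spineTm (fun _ => c) (p ++ false :: r)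
        = spineTm (fun _ => c) (List.replicate (p.length + 1) false ++ r) := by
          rw [List.replicate_succ', List.append_assoc, ← hrep]; rfl
      _ = spineTm (fun _ => c) r := spine_rep c _ r
      _ = spineTm (fun _ => c) (p ++ r) := by rw [hrep, spine_rep]
  · rfl

lemma rtg_fix (c : FabSym) (hc : c ≠ FabSym.f) {n : ℕ} {x : Tm}
    (h : Relation.ReflTransGen (stepTGe n) (spineTm fun _ => c) x) :
    x = spineTm fun _ => c := by
  induction h with
  | refl => rfl
  | tail _ hst ih =>
    rw [ih] at hst
    obtain ⟨p, _, hs⟩ := hst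
    exact step_fix c hc hs

lemma sconv_fix (c : FabSym) (hc : c ≠ FabSym.f) {u : Tm}
    (h : sconvT (spineTm fun _ => c) u) : u = spineTm fun _ => c := by
  obtain ⟨g, hg0, hstep, hlim⟩ := h
  have key : ∀ n, g n = spineTm fun _ => c := by
    intro n
    induction n with
    | zero => exact hg0
    | succ n ih =>
      have h2 := hstep n
      rw [ih] at h2
      exact rtg_fix c hc h2
  funext q
  have := hlim (q.length + 1) q (by omega)
  rw [key] at this
  exact this.symm

lemma spine_nil (c : FabSym) : spineTm (fun _ => c) [] = FabSym.f := rfl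

lemma spine_true (c : FabSym) : spineTm (fun _ => c) [true] = c := rfl

lemma occurs_spine (c : FabSym) : OccursIn (spineTm fun _ => c) c := by
  refine ⟨[true], ?_, spine_true c⟩
  intro q hq hne
  obtain ⟨r, hr⟩ := hq
  cases q with
  | nil => exact spine_nil c
  | cons x l =>
    cases l with
    | nil => simp_all
    | cons y m => simp at hr

lemma not_occurs_spine (c d : FabSym) (hcd : c ≠ d) (hd : d ≠ FabSym.f)
    (hcf : c ≠ FabSym.f) : ¬ OccursIn (spineTm fun _ => c) d := by
  rintro ⟨p, hreach, hp⟩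
  unfold spineTm at hp
  simp only at hp
  split at hp
  · exact hd hp.symm
  · next hrne =>
    split at hp
    · exact hcd hp
    · next hr1 =>
      set tw := p.takeWhile (fun x => !x) with htw
      have htwmem : ∀ x ∈ tw, (fun x => !x) x = true := fun x hx => List.mem_takeWhile_imp hx
      obtain ⟨rr, hrr⟩ : tw <+: p := htw ▸ List.takeWhile_prefix _
      have hdec : tw ++ p.drop tw.length = p := by
        rw [← hrr, List.drop_left]
      obtain ⟨x, rest, hxr⟩ : ∃ x rest, p.drop tw.length = x :: rest := by
        cases h : p.drop tw.length with
        | nil => exact absurd h hrne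
        | cons x rest => exact ⟨x, rest, rfl⟩
      have hx : x = true := by
        by_contra hxf
        have hx' : x = false := by cases x <;> simp_all
        have : p.takeWhile (fun x => !x) = tw ++ (x :: rest).takeWhile (fun x => !x) := by
          conv_lhs => rw [← hdec, hxr]
          exact List.takeWhile_append_of_pos htwmem
        rw [hx', List.takeWhile_cons] at this
        simp only [Bool.not_false, if_pos rfl] at this
        have hlen := congrArg List.length this
        simp [← htw] at hlen
      have hrestne : rest ≠ [] := by
        rintro rfl
        rw [hxr, hx] at hr1
        exact hr1 rfl
      have hpre : (tw ++ [true]) <+: p := ⟨rest, by rw [List.append_assoc, List.singleton_append, ← hx, ← hxr, hdec]⟩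
      have hneq : tw ++ [true] ≠ p := by
        intro he
        have := congrArg List.length he
        rw [← hdec, hxr] at this
        simp at this
        simp_all
      have hfval := hreach _ hpre hneq
      have htwrep : tw = List.replicate tw.length false := by
        rw [List.eq_replicate_iff]
        refine ⟨rfl, fun b hb => ?_⟩
        have := htwmem b hb
        simpa using this
      rw [htwrep, spine_rep] at hfval
      rw [spine_true] at hfval
      exact hcf hfval

/-- every reduct of `t₁ = f(t₁,a)` under the rule `f(x,y) → x`
contains the constant `a` and never contains `b`, and symmetrically for
`t₂ = f(t₂,b)`; hence `t₁` and `t₂` are not joinable. -/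
theorem statement13 :
    (∀ u : Tm, sconvT t1Term u → OccursIn u FabSym.a ∧ ¬ OccursIn u FabSym.b) ∧
    (∀ u : Tm, sconvT t2Term u → OccursIn u FabSym.b ∧ ¬ OccursIn u FabSym.a) ∧
    ¬ ∃ u : Tm, sconvT t1Term u ∧ sconvT t2Term u := by
  have ha : (FabSym.a : FabSym) ≠ FabSym.f := by decide
  have hb : (FabSym.b : FabSym) ≠ FabSym.f := by decide
  refine ⟨fun u hu => ?_, fun u hu => ?_, ?_⟩
  · rw [sconv_fix FabSym.a ha hu]
    exact ⟨occurs_spine _, not_occurs_spine FabSym.a FabSym.b (by decide) (by decide) (by decide)⟩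
  · rw [sconv_fix FabSym.b hb hu]
    exact ⟨occurs_spine _, not_occurs_spine FabSym.b FabSym.a (by decide) (by decide) (by decide)⟩
  · rintro ⟨u, h1, h2⟩
    have e1 := sconv_fix FabSym.a ha h1
    have e2 := sconv_fix FabSym.b hb h2
    have : t1Term = t2Term := by rw [t1Term, t2Term, ← e1, ← e2]
    have := congrFun this [true]
    simp [t1Term, t2Term, spine_true] at this
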